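/- Let γ ∈ (0,1] and α ≥ 0. Let s, x, y, u, v : (0,∞) → ℝ with s continuous and s(r) > 0 for all r, y differentiable with y(r) ≠ 0 for all r, v differentiable, and r ↦ r u(r)(γ s(r)² + 4α v(r)²) differentiable, satisfying on (0,∞) the equations (U): v' y − v y' + (2y² + (γ/2) s² + 2v²) u = 0 and (I): (r u (γ s² + 4α v²))' + 2r (γ x s² + 4α y u²) v = 0. Assume the function Φ(r) := r u v (γ s² + 4α v²)/y tends to 0 as r → 0⁺ and as r → ∞, Φ' is integrable on (0,∞), and the functions r ↦ 2r{[1 + (v² + (γ/4)s²)/y²](γ s² + 4α v²) + 4α v²} u² and r ↦ 2r (x/y) γ s² v² are integrable on (0,∞). Then ∫₀^∞ 2r{[1 + (v² + (γ/4)s²)/y²](γ s² + 4α v²) + 4α v²} u² dr + ∫₀^∞ 2r (x/y) γ s² v² dr = 0. -/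

import Mathlib

open Set Filter MeasureTheory Topology Real

/-!
With `V = v / y` and `U = r u (γ s² + 4α v²)`, equation (U) gives
`V' = -(2y² + (γ/2) s² + 2v²) u / y²` and equation (I) gives
`U' = -2r (γ x s² + 4α y u²) v`, so `(U V)' = U' V + U V'` is minus the sum of the two
integrands. Since `Φ = U V` vanishes at both ends of `(0, ∞)`, the integral of `Φ'` is zero.
-/

theorem integral_Ioi_of_hasDerivAt_of_tendsto_nhdsGT {f f' : ℝ → ℝ} {a l m : ℝ}
    (hl : Tendsto f (𝓝[>] a) (𝓝 l)) (hderiv : ∀ x ∈ Ioi a, HasDerivAt f (f' x) x)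
    (f'int : IntegrableOn f' (Ioi a)) (hm : Tendsto f atTop (𝓝 m)) :
    ∫ x in Ioi a, f' x = m - l := by
  set g := Function.update f a l
  have hgf : ∀ x ∈ Ioi a, g x = f x := fun x hx => Function.update_of_ne (ne_of_gt hx) _ _
  have hcont : ContinuousWithinAt g (Ici a) a := by
    rw [← continuousWithinAt_Ioi_iff_Ici, ContinuousWithinAt, show g a = l from
      Function.update_self _ _ _]
    exact hl.congr' (eventually_nhdsWithin_of_forall fun x hx => (hgf x hx).symm)
  have hgderiv : ∀ x ∈ Ioi a, HasDerivAt g (f' x) x := fun x hx =>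
    (hderiv x hx).congr_of_eventuallyEq <|
      Filter.mem_of_superset (Ioi_mem_nhds hx) fun t ht => hgf t ht
  have hgm : Tendsto g atTop (𝓝 m) :=
    hm.congr' <| (eventually_gt_atTop a).mono fun x hx => (hgf x hx).symm
  simpa [g] using integral_Ioi_of_hasDerivAt_of_tendsto hcont hgderiv f'int hgm

theorem hasDerivAt_vortex_flux {γ α r y'r v'r U'r : ℝ} {s x y u v : ℝ → ℝ}
    (hy : HasDerivAt y y'r r) (hyr : y r ≠ 0) (hv : HasDerivAt v v'r r)
    (hU : HasDerivAt (fun t => t * u t * (γ * s t ^ 2 + 4 * α * v t ^ 2)) U'r r)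
    (hUeq : v'r * y r - v r * y'r + (2 * y r ^ 2 + γ / 2 * s r ^ 2 + 2 * v r ^ 2) * u r = 0)
    (hIeq : U'r + 2 * r * (γ * x r * s r ^ 2 + 4 * α * y r * u r ^ 2) * v r = 0) :
    HasDerivAt (fun t => t * u t * v t * (γ * s t ^ 2 + 4 * α * v t ^ 2) / y t)
      (-(2 * r * ((1 + (v r ^ 2 + γ / 4 * s r ^ 2) / y r ^ 2)
          * (γ * s r ^ 2 + 4 * α * v r ^ 2) + 4 * α * v r ^ 2) * u r ^ 2
        + 2 * r * (x r / y r) * γ * s r ^ 2 * v r ^ 2)) r := by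
  have hV' : v'r * y r - v r * y'r = -((2 * y r ^ 2 + γ / 2 * s r ^ 2 + 2 * v r ^ 2) * u r) := by
    linarith
  have hU' : U'r = -(2 * r * (γ * x r * s r ^ 2 + 4 * α * y r * u r ^ 2) * v r) := by
    linarith
  have hΦ_eq_UV : (fun t => t * u t * v t * (γ * s t ^ 2 + 4 * α * v t ^ 2) / y t)
      = fun t => t * u t * (γ * s t ^ 2 + 4 * α * v t ^ 2) * (v t / y t) := by
    funext t
    ring
  rw [hΦ_eq_UV]
  refine (hU.mul (hv.div hy hyr)).congr_deriv ?_
  rw [Pi.div_apply, hV', hU']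
  field_simp
  ring

theorem statement4 (γ α : ℝ)
    (s x y u v y' v' U' : ℝ → ℝ)
    (hy : ∀ r ∈ Set.Ioi (0:ℝ), HasDerivAt y (y' r) r)
    (hyne : ∀ r : ℝ, 0 < r → y r ≠ 0)
    (hv : ∀ r ∈ Set.Ioi (0:ℝ), HasDerivAt v (v' r) r)
    (hUd : ∀ r ∈ Set.Ioi (0:ℝ),
      HasDerivAt (fun t => t * u t * (γ * s t ^ 2 + 4 * α * v t ^ 2)) (U' r) r)
    (hUeq : ∀ r ∈ Set.Ioi (0:ℝ),
      v' r * y r - v r * y' r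
        + (2 * y r ^ 2 + γ / 2 * s r ^ 2 + 2 * v r ^ 2) * u r = 0)
    (hIeq : ∀ r ∈ Set.Ioi (0:ℝ),
      U' r + 2 * r * (γ * x r * s r ^ 2 + 4 * α * y r * u r ^ 2) * v r = 0)
    (hΦ0 : Filter.Tendsto
      (fun r => r * u r * v r * (γ * s r ^ 2 + 4 * α * v r ^ 2) / y r)
      (nhdsWithin 0 (Set.Ioi 0)) (nhds 0))
    (hΦinf : Filter.Tendsto
      (fun r => r * u r * v r * (γ * s r ^ 2 + 4 * α * v r ^ 2) / y r)
      Filter.atTop (nhds 0))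
    (hint1 : MeasureTheory.IntegrableOn
      (fun r => 2 * r * ((1 + (v r ^ 2 + γ / 4 * s r ^ 2) / y r ^ 2)
          * (γ * s r ^ 2 + 4 * α * v r ^ 2) + 4 * α * v r ^ 2) * u r ^ 2)
      (Set.Ioi 0))
    (hint2 : MeasureTheory.IntegrableOn
      (fun r => 2 * r * (x r / y r) * γ * s r ^ 2 * v r ^ 2) (Set.Ioi 0)) :
    (∫ r in Set.Ioi (0:ℝ), 2 * r * ((1 + (v r ^ 2 + γ / 4 * s r ^ 2) / y r ^ 2)
          * (γ * s r ^ 2 + 4 * α * v r ^ 2) + 4 * α * v r ^ 2) * u r ^ 2)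
      + (∫ r in Set.Ioi (0:ℝ), 2 * r * (x r / y r) * γ * s r ^ 2 * v r ^ 2) = 0 := by
  have hderiv := fun r (hr : r ∈ Ioi (0:ℝ)) =>
    hasDerivAt_vortex_flux (hy r hr) (hyne r hr) (hv r hr) (hUd r hr) (hUeq r hr) (hIeq r hr)
  have hFTC := integral_Ioi_of_hasDerivAt_of_tendsto_nhdsGT hΦ0 hderiv (hint1.add hint2).neg hΦinf
  rw [integral_neg, integral_add hint1 hint2] at hFTC
  linarith
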